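/- arXiv:1908.06457 — 3 statements merged into one kernel-verified Lean document; each statement's English description precedes it below -/
import Mathlib

section
/- If the equation -Δv = 2t²K e^v - 2(1 - e^{-v}) on a closed hyperbolic surface of genus g ≥ 2 admits a solution v ≥ 0, then t ≤ 1 / (⨍_S 2√K dA), where ⨍ denotes the average integral. -/
open MeasureTheory Real

/-!
Integrating the equation over `S`, the Laplacian term drops out and leaves
`t² ∫ K e^v + ∫ e^{-v} = |S|`. Pointwise AM–GM gives `2t√K ≤ t² K e^v + e^{-v}`,
so `2t ∫ √K ≤ |S|`, which is the claimed bound on `t` after dividing by `∫ 2√K > 0`.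
-/

theorem two_mul_mul_sqrt_le_sq_mul_exp_add_exp_neg (t v : ℝ) {k : ℝ} (hk : 0 ≤ k) :
    2 * t * √k ≤ t ^ 2 * (k * exp v) + exp (-v) := by
  have hsq : exp (v / 2) ^ 2 = exp v := by rw [← exp_nat_mul]; ring_nf
  have hsq' : exp (-v / 2) ^ 2 = exp (-v) := by rw [← exp_nat_mul]; ring_nf
  have hprod : exp (v / 2) * exp (-v / 2) = 1 := by rw [← exp_add]; ring_nf; exact exp_zero
  have hexpand : (t * √k * exp (v / 2) - exp (-v / 2)) ^ 2
      = t ^ 2 * (k * exp v) + exp (-v) - 2 * t * √k := by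
    linear_combination (t ^ 2 * exp (v / 2) ^ 2) * sq_sqrt hk + (t ^ 2 * k) * hsq
      - (2 * t * √k) * hprod + hsq'
  linarith [sq_nonneg (t * √k * exp (v / 2) - exp (-v / 2))]

section

variable {S : Type*} [MeasurableSpace S] {μ : Measure S}

theorem sq_mul_integral_add_integral_exp_neg_eq_measureReal_univ [IsFiniteMeasure μ]
    {K v Δv : S → ℝ} {t : ℝ}
    (heq : ∀ x, -Δv x = 2 * t ^ 2 * K x * exp (v x) - 2 * (1 - exp (-v x)))
    (hΔ0 : ∫ x, Δv x ∂μ = 0)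
    (hKint : Integrable (fun x => K x * exp (v x)) μ)
    (hvint : Integrable (fun x => exp (-v x)) μ) :
    t ^ 2 * ∫ x, K x * exp (v x) ∂μ + ∫ x, exp (-v x) ∂μ = μ.real Set.univ := by
  have hΔ : (fun x => -Δv x)
      = fun x => 2 * (t ^ 2 * (K x * exp (v x))) - 2 * (1 - exp (-v x)) := by
    funext x; rw [heq x]; ring
  have hrest : Integrable (fun x => 1 - exp (-v x)) μ := (integrable_const 1).sub hvint
  have hzero := integral_neg Δv (μ := μ)
  rw [hΔ, hΔ0, integral_sub ((hKint.const_mul _).const_mul _) (hrest.const_mul _),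
    integral_const_mul, integral_const_mul, integral_const_mul,
    integral_sub (integrable_const 1) hvint, integral_const, smul_eq_mul, mul_one] at hzero
  linarith

theorem le_one_div_average_of_mul_integral_le {f : S → ℝ} {c : ℝ}
    (hf : 0 < ∫ x, f x ∂μ) (h : c * ∫ x, f x ∂μ ≤ μ.real Set.univ) :
    c ≤ 1 / ⨍ x, f x ∂μ := by
  rwa [average_eq, smul_eq_mul, one_div, mul_inv, inv_inv, ← div_eq_mul_inv, le_div_iff₀ hf]

end

theorem solvability_upper_bound_t_general
    {S : Type*} [MeasurableSpace S] (μ : Measure S) [IsFiniteMeasure μ]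
    (K v Δv : S → ℝ) (t : ℝ) (hK : ∀ x, 0 ≤ K x)
    (hKpos : 0 < ∫ x, Real.sqrt (K x) ∂μ)
    (hKsqrt : Integrable (fun x => Real.sqrt (K x)) μ)
    (heq : ∀ x, -Δv x = 2 * t ^ 2 * K x * exp (v x) - 2 * (1 - exp (-v x)))
    (hΔ0 : ∫ x, Δv x ∂μ = 0)
    (hKint : Integrable (fun x => K x * exp (v x)) μ)
    (hvint : Integrable (fun x => exp (-v x)) μ) :
    t ≤ 1 / (⨍ x, 2 * Real.sqrt (K x) ∂μ) := by
  have hamgm : ∫ x, 2 * t * √(K x) ∂μ ≤ ∫ x, t ^ 2 * (K x * exp (v x)) + exp (-v x) ∂μ :=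
    integral_mono (hKsqrt.const_mul _) ((hKint.const_mul _).add hvint)
      fun x => two_mul_mul_sqrt_le_sq_mul_exp_add_exp_neg t (v x) (hK x)
  have harea := sq_mul_integral_add_integral_exp_neg_eq_measureReal_univ heq hΔ0 hKint hvint
  rw [integral_add (hKint.const_mul _) hvint, integral_const_mul, integral_const_mul] at hamgm
  refine le_one_div_average_of_mul_integral_le (by rw [integral_const_mul]; linarith) ?_
  rw [integral_const_mul]
  linarith

/-- If the Gauss equation `-Δv = 2t²K e^v - 2(1-e^{-v})` on a closed hyperbolic
surface of genus `g ≥ 2` admits a solution `v ≥ 0`, then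
`t ≤ 1 / (⨍ 2√K dA)`, the average integral being taken over `S`. -/
theorem solvability_upper_bound_t
    {S : Type*} [MeasurableSpace S] (μ : Measure S) [IsFiniteMeasure μ]
    (g : ℕ) (hg : 2 ≤ g)
    (hGB : (μ Set.univ).toReal = 4 * π * ((g : ℝ) - 1))
    (K v Δv : S → ℝ) (t : ℝ) (ht : 0 ≤ t) (hK : ∀ x, 0 ≤ K x)
    (hKpos : 0 < ∫ x, Real.sqrt (K x) ∂μ)
    (hKsqrt : Integrable (fun x => Real.sqrt (K x)) μ)
    (hv : ∀ x, 0 ≤ v x)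
    (heq : ∀ x, -Δv x = 2 * t ^ 2 * K x * exp (v x) - 2 * (1 - exp (-v x)))
    (hΔint : Integrable Δv μ) (hΔ0 : ∫ x, Δv x ∂μ = 0)
    (hKint : Integrable (fun x => K x * exp (v x)) μ)
    (hvint : Integrable (fun x => exp (-v x)) μ) :
    t ≤ 1 / (⨍ x, 2 * Real.sqrt (K x) ∂μ) :=
  solvability_upper_bound_t_general μ K v Δv t hK hKpos hKsqrt heq hΔ0 hKint hvint
end

section
/- If v is a solution of -Δv = 2t²K e^v - 2(1-e^{-v}) with v = w + c, ∫_S w dA = 0, and t ≥ δ > 0, then 0 < c ≤ log(4π(g-1)/δ²) - log(∫_S K e^w dA). -/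
open MeasureTheory Real

/-!
Write `v = w + c`, `I = ∫ K e^w` and `J = ∫ e^{-w}`. Averaging `v > 0` against `∫ w = 0` gives
`c · |S| > 0`. Integrating the equation, `∫ Δv = 0` leaves `t² e^c I + e^{-c} J = |S|`, the
quadratic solved by `e^c`; dropping `e^{-c} J ≥ 0` gives `e^c ≤ |S| / (t² I) ≤ |S| / (δ² I)`,
and Gauss–Bonnet `|S| = 4π(g-1)` turns this into the bound on `c`.
-/

section

variable {α : Type*} [MeasurableSpace α] {μ : Measure α} [IsFiniteMeasure μ]

theorem pos_of_integral_eq_zero_of_forall_add_pos (hμ : μ ≠ 0) {w : α → ℝ} {c : ℝ}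
    (hwi : Integrable w μ) (hw0 : ∫ x, w x ∂μ = 0) (hv : ∀ x, 0 < w x + c) : 0 < c := by
  have hsupp : Function.support (fun x => w x + c) = Set.univ :=
    Set.eq_univ_of_forall fun x => (hv x).ne'
  have hpos : 0 < ∫ x, (w x + c) ∂μ := by
    rw [integral_pos_iff_support_of_nonneg (fun x => (hv x).le) (hwi.add (integrable_const c)),
      hsupp, pos_iff_ne_zero, Measure.measure_univ_ne_zero]
    exact hμ
  rw [integral_add hwi (integrable_const c), hw0, integral_const, smul_eq_mul, zero_add] at hpos
  exact pos_of_mul_pos_right hpos measureReal_nonneg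

theorem sq_mul_exp_mul_integral_add_exp_neg_mul_integral_eq_measureReal_univ
    {K w Δv : α → ℝ} {c t : ℝ}
    (heq : ∀ x, -Δv x = 2 * t ^ 2 * K x * exp (w x + c) - 2 * (1 - exp (-(w x + c))))
    (hΔ0 : ∫ x, Δv x ∂μ = 0)
    (hKint : Integrable (fun x => K x * exp (w x)) μ)
    (hwint : Integrable (fun x => exp (-w x)) μ) :
    t ^ 2 * exp c * ∫ x, K x * exp (w x) ∂μ + exp (-c) * ∫ x, exp (-w x) ∂μ = μ.real Set.univ := by
  have hpt : (fun x => -Δv x) =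
      fun x => 2 * (t ^ 2 * exp c * (K x * exp (w x)) + exp (-c) * exp (-w x)) - 2 := by
    funext x
    rw [heq x, exp_add, neg_add, exp_add]
    ring
  have hint : Integrable
      (fun x => 2 * (t ^ 2 * exp c * (K x * exp (w x)) + exp (-c) * exp (-w x))) μ :=
    ((hKint.const_mul _).add (hwint.const_mul _)).const_mul 2
  have hzero := congrArg (fun f => ∫ x, f x ∂μ) hpt
  simp only [integral_neg, hΔ0, neg_zero] at hzero
  rw [integral_sub hint (integrable_const 2), integral_const_mul,
    integral_add (hKint.const_mul _) (hwint.const_mul _), integral_const_mul, integral_const_mul,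
    integral_const, smul_eq_mul] at hzero
  linarith

end

theorem le_log_div_sub_log_of_mul_exp_mul_le {a b c M : ℝ} (ha : 0 < a) (hb : 0 < b)
    (h : a * exp c * b ≤ M) : c ≤ log (M / a) - log b := by
  have hM : 0 < M := lt_of_lt_of_le (by positivity) h
  rw [← log_div (div_pos hM ha).ne' hb.ne', le_log_iff_exp_le (by positivity), div_div,
    le_div_iff₀ (by positivity)]
  linarith

theorem mean_value_upper_bound_general
    {S : Type*} [MeasurableSpace S] (μ : Measure S) [IsFiniteMeasure μ]
    (g : ℕ)
    (hGB : (μ Set.univ).toReal = 4 * π * ((g : ℝ) - 1))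
    (K w Δv : S → ℝ) (c t δ : ℝ) (hδ : 0 < δ) (htδ : δ ≤ t)
    (hKw : 0 < ∫ x, K x * exp (w x) ∂μ)
    (hw0 : ∫ x, w x ∂μ = 0)
    (hv : ∀ x, 0 < w x + c)
    (heq : ∀ x, -Δv x = 2 * t ^ 2 * K x * exp (w x + c) - 2 * (1 - exp (-(w x + c))))
    (hΔ0 : ∫ x, Δv x ∂μ = 0)
    (hwi : Integrable w μ)
    (hKint : Integrable (fun x => K x * exp (w x)) μ)
    (hwint : Integrable (fun x => exp (-w x)) μ) :
    0 < c ∧ c ≤ Real.log (4 * π * ((g : ℝ) - 1) / δ ^ 2)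
        - Real.log (∫ x, K x * exp (w x) ∂μ) := by
  have hμ : μ ≠ 0 := by
    rintro rfl
    simp at hKw
  refine ⟨pos_of_integral_eq_zero_of_forall_add_pos hμ hwi hw0 hv, ?_⟩
  have hbalance :=
    sq_mul_exp_mul_integral_add_exp_neg_mul_integral_eq_measureReal_univ heq hΔ0 hKint hwint
  have hJ : 0 ≤ exp (-c) * ∫ x, exp (-w x) ∂μ :=
    mul_nonneg (exp_pos _).le (integral_nonneg fun x => (exp_pos _).le)
  have hδt : δ ^ 2 ≤ t ^ 2 := pow_le_pow_left₀ hδ.le htδ 2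
  have hle : δ ^ 2 * exp c * ∫ x, K x * exp (w x) ∂μ ≤ μ.real Set.univ := by
    nlinarith [mul_le_mul_of_nonneg_right hδt (mul_pos (exp_pos c) hKw).le]
  rw [← hGB]
  exact le_log_div_sub_log_of_mul_exp_mul_le (by positivity) hKw hle

/-- If `v = w + c` solves the Gauss equation with `∫ w = 0` and `t ≥ δ > 0`,
then `0 < c ≤ log(4π(g-1)/δ²) - log(∫ K e^w)`. -/
theorem mean_value_upper_bound
    {S : Type*} [MeasurableSpace S] (μ : Measure S) [IsFiniteMeasure μ]
    (g : ℕ) (hg : 2 ≤ g)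
    (hGB : (μ Set.univ).toReal = 4 * π * ((g : ℝ) - 1))
    (K w Δv : S → ℝ) (c t δ : ℝ) (hδ : 0 < δ) (htδ : δ ≤ t)
    (hK : ∀ x, 0 ≤ K x)
    (hKw : 0 < ∫ x, K x * exp (w x) ∂μ)
    (hw0 : ∫ x, w x ∂μ = 0)
    (hv : ∀ x, 0 < w x + c)
    (heq : ∀ x, -Δv x = 2 * t ^ 2 * K x * exp (w x + c) - 2 * (1 - exp (-(w x + c))))
    (hΔint : Integrable Δv μ) (hΔ0 : ∫ x, Δv x ∂μ = 0)
    (hwi : Integrable w μ)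
    (hKint : Integrable (fun x => K x * exp (w x)) μ)
    (hwint : Integrable (fun x => exp (-w x)) μ) :
    0 < c ∧ c ≤ Real.log (4 * π * ((g : ℝ) - 1) / δ ^ 2)
        - Real.log (∫ x, K x * exp (w x) ∂μ) :=
  mean_value_upper_bound_general μ g hGB K w Δv c t δ hδ htδ hKw hw0 hv heq hΔ0 hwi hKint hwint
end

section
/- Suppose v_n = w_n + c_n are solutions of -Δv_n = 2t_n²K e^{v_n} - 2(1 - e^{-v_n}) on a closed hyperbolic surface of genus g ≥ 2, with ∫_S w_n dA = 0, c_n = ⨍_S v_n dA, and suppose ρ_n := t_n²∫_S K e^{v_n} dA → 4π(g-1). Then ∫_S e^{-v_n} dA → 0, and consequently c_n → +∞; moreover if additionally c_n ≤ C for some constant, a contradiction arises via Jensen's inequality e^{-c_n}∫_S e^{-w_n} dA ≥ |S|e^{-c_n} ≥ |S|e^{-C} > 0. -/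
open MeasureTheory Real Filter

/-!
Integrating the equation over the closed surface kills the Laplacian, which gives the conservation
identity `∫ e^{-v_n} = |S| - ρ_n`; by Gauss–Bonnet `|S| = 4π(g-1)`, so `∫ e^{-v_n} → 0`.
On the other hand `e^{-v_n} = e^{-c_n} e^{-w_n}` and, `w_n` having mean zero, Jensen's inequality
gives `∫ e^{-w_n} ≥ |S|`; hence `e^{-c_n} |S| ≤ ∫ e^{-v_n} → 0`, i.e. `c_n → +∞`.
-/

section

variable {S : Type*} [MeasurableSpace S] {μ : Measure S} [IsFiniteMeasure μ]

theorem integral_exp_neg_eq_measureReal_sub {K v Δv : S → ℝ} {a : ℝ}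
    (heq : ∀ x, -Δv x = 2 * a * K x * exp (v x) - 2 * (1 - exp (-v x)))
    (hΔ0 : ∫ x, Δv x ∂μ = 0)
    (hKint : Integrable (fun x => K x * exp (v x)) μ)
    (hvint : Integrable (fun x => exp (-v x)) μ) :
    ∫ x, exp (-v x) ∂μ = μ.real Set.univ - a * ∫ x, K x * exp (v x) ∂μ := by
  have hint : ∫ x, -Δv x ∂μ
      = 2 * a * ∫ x, K x * exp (v x) ∂μ - 2 * (μ.real Set.univ - ∫ x, exp (-v x) ∂μ) := by
    have hint1 : Integrable (fun x => 2 * (1 - exp (-v x))) μ :=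
      ((integrable_const 1).sub hvint).const_mul 2
    simp_rw [heq, mul_assoc (2 * a)]
    rw [integral_sub (hKint.const_mul _) hint1, integral_const_mul, integral_const_mul,
      integral_sub (integrable_const 1) hvint, integral_const, smul_eq_mul, mul_one]
  rw [integral_neg, hΔ0] at hint
  linarith

/-- Jensen's inequality for `exp ∘ (-·)` in the tangent-line form `1 - w ≤ e^{-w}`. -/
theorem measureReal_univ_le_integral_exp_neg {w : S → ℝ} (hw : Integrable w μ)
    (hexp : Integrable (fun x => exp (-w x)) μ) (hw0 : ∫ x, w x ∂μ = 0) :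
    μ.real Set.univ ≤ ∫ x, exp (-w x) ∂μ :=
  calc μ.real Set.univ = ∫ x, (1 - w x) ∂μ := by
        rw [integral_sub (integrable_const 1) hw, hw0, integral_const, smul_eq_mul, mul_one,
          sub_zero]
    _ ≤ ∫ x, exp (-w x) ∂μ :=
        integral_mono ((integrable_const 1).sub hw) hexp fun x => by
          linarith [add_one_le_exp (-w x)]

theorem exp_neg_mul_measureReal_univ_le_integral {w : S → ℝ} (c : ℝ) (hw : Integrable w μ)
    (hexp : Integrable (fun x => exp (-(w x + c))) μ) (hw0 : ∫ x, w x ∂μ = 0) :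
    exp (-c) * μ.real Set.univ ≤ ∫ x, exp (-(w x + c)) ∂μ := by
  have hfactor : ∀ x, exp (-(w x + c)) = exp (-c) * exp (-w x) := fun x => by
    rw [← exp_add]; ring_nf
  have hexp_w : Integrable (fun x => exp (-w x)) μ := by
    refine (hexp.const_mul (exp c)).congr (ae_of_all _ fun x => ?_)
    dsimp only
    rw [← exp_add]
    ring_nf
  simp_rw [hfactor, integral_const_mul]
  exact mul_le_mul_of_nonneg_left
    (measureReal_univ_le_integral_exp_neg hw hexp_w hw0) (exp_nonneg _)

end

theorem tendsto_atTop_of_exp_neg_mul_le {ι : Type*} {l : Filter ι} {c I : ι → ℝ} {A : ℝ}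
    (hA : 0 < A) (hle : ∀ i, exp (-c i) * A ≤ I i) (hI : Tendsto I l (nhds 0)) :
    Tendsto c l atTop := by
  have hexp : Tendsto (fun i => exp (-c i)) l (nhds 0) := by
    refine squeeze_zero (fun i => (exp_pos _).le) (fun i => ?_) (by simpa using hI.div_const A)
    exact (le_div_iff₀ hA).2 (hle i)
  simpa using tendsto_neg_atBot_iff.mp (tendsto_exp_comp_nhds_zero.mp hexp)

theorem blowup_mean_value_tendsto_general
    {S : Type*} [MeasurableSpace S] (μ : Measure S) [IsFiniteMeasure μ]
    (g : ℕ) (hg : 2 ≤ g)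
    (hGB : (μ Set.univ).toReal = 4 * π * ((g : ℝ) - 1))
    (K : S → ℝ)
    (v w : ℕ → S → ℝ) (c t : ℕ → ℝ) (Δv : ℕ → S → ℝ)
    (hsplit : ∀ n x, v n x = w n x + c n)
    (hw0 : ∀ n, ∫ x, w n x ∂μ = 0)
    (hwi : ∀ n, Integrable (w n) μ)
    (heq : ∀ n x, -Δv n x =
      2 * (t n) ^ 2 * K x * exp (v n x) - 2 * (1 - exp (-(v n x))))
    (hΔ0 : ∀ n, ∫ x, Δv n x ∂μ = 0)
    (hKint : ∀ n, Integrable (fun x => K x * exp (v n x)) μ)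
    (hvint : ∀ n, Integrable (fun x => exp (-(v n x))) μ)
    (hρ : Tendsto (fun n => (t n) ^ 2 * ∫ x, K x * exp (v n x) ∂μ) atTop
      (nhds (4 * π * ((g : ℝ) - 1)))) :
    Tendsto (fun n => ∫ x, exp (-(v n x)) ∂μ) atTop (nhds 0) ∧
      Tendsto c atTop atTop := by
  have hGB' : μ.real Set.univ = 4 * π * ((g : ℝ) - 1) := hGB
  have harea : 0 < μ.real Set.univ := by
    have : (2 : ℝ) ≤ g := by exact_mod_cast hg
    rw [hGB']
    exact mul_pos (by positivity) (by linarith)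
  have hlim : Tendsto (fun n => ∫ x, exp (-(v n x)) ∂μ) atTop (nhds 0) := by
    simp_rw [integral_exp_neg_eq_measureReal_sub (heq _) (hΔ0 _) (hKint _) (hvint _)]
    simpa [hGB'] using (tendsto_const_nhds (x := μ.real Set.univ)).sub hρ
  refine ⟨hlim, tendsto_atTop_of_exp_neg_mul_le harea (fun n => ?_) hlim⟩
  have hexp := hvint n
  simp_rw [hsplit n] at hexp ⊢
  exact exp_neg_mul_measureReal_univ_le_integral (c n) (hwi n) hexp (hw0 n)

/-- If `v_n = w_n + c_n` solve the Gauss equations with parameters `t_n` on a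
closed hyperbolic surface of genus `g ≥ 2`, with `∫ w_n = 0`, and
`ρ_n := t_n²∫K e^{v_n} → 4π(g-1)`, then `∫ e^{-v_n} → 0` and `c_n → +∞`. -/
theorem blowup_mean_value_tendsto
    {S : Type*} [MeasurableSpace S] (μ : Measure S) [IsFiniteMeasure μ]
    (g : ℕ) (hg : 2 ≤ g)
    (hGB : (μ Set.univ).toReal = 4 * π * ((g : ℝ) - 1))
    (K : S → ℝ) (hK : ∀ x, 0 ≤ K x)
    (v w : ℕ → S → ℝ) (c t : ℕ → ℝ) (Δv : ℕ → S → ℝ)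
    (hsplit : ∀ n x, v n x = w n x + c n)
    (hw0 : ∀ n, ∫ x, w n x ∂μ = 0)
    (hwi : ∀ n, Integrable (w n) μ)
    (heq : ∀ n x, -Δv n x =
      2 * (t n) ^ 2 * K x * exp (v n x) - 2 * (1 - exp (-(v n x))))
    (hΔint : ∀ n, Integrable (Δv n) μ) (hΔ0 : ∀ n, ∫ x, Δv n x ∂μ = 0)
    (hKint : ∀ n, Integrable (fun x => K x * exp (v n x)) μ)
    (hvint : ∀ n, Integrable (fun x => exp (-(v n x))) μ)
    (hρ : Tendsto (fun n => (t n) ^ 2 * ∫ x, K x * exp (v n x) ∂μ) atTop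
      (nhds (4 * π * ((g : ℝ) - 1)))) :
    Tendsto (fun n => ∫ x, exp (-(v n x)) ∂μ) atTop (nhds 0) ∧
      Tendsto c atTop atTop :=
  blowup_mean_value_tendsto_general μ g hg hGB K v w c t Δv hsplit hw0 hwi heq hΔ0 hKint hvint hρ
end
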